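/- arXiv:1702.06444 — 2 statements merged into one kernel-verified Lean document; each statement's English description precedes it below -/
import Mathlib

section
/- Let (X_i)_{i≥0} be a stationary sequence of nonnegative integrable real random variables that is mixing, i.e., for all n, m and all bounded measurable f : ℝ^{n+1} → ℝ and g : ℝ^{m+1} → ℝ, E[f(X_0,…,X_n) g(X_k,…,X_{k+m})] → E[f(X_0,…,X_n)] E[g(X_0,…,X_m)] as k → ∞. Then (1/n) Σ_{i=0}^{n-1} X_i converges almost surely to E[X_0]. -/
open MeasureTheory ProbabilityTheory Filter

/-!
By stationarity the law `μ` of the path `ω ↦ (X n ω)ₙ` on `ℕ → ℝ` is invariant under the left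
shift, and mixing makes the shift ergodic: an invariant set `s` is approximated by a cylinder `A`,
and `μ (A ∩ shift⁻ᵏ A) → μ A ^ 2` then forces `μ s = μ s ^ 2`. The theorem is Birkhoff's ergodic
theorem for `y ↦ y 0` on `(ℕ → ℝ, μ)`, proved for nonnegative functions by the Katznelson–Weiss
covering argument: the limsup of the Birkhoff averages is invariant, hence a.e. equal to a
constant; if it exceeded some `c > ∫ f`, almost every orbit would be tiled, outside a set of
small measure, by blocks of bounded length on which the average is at least `c`, and integrating
this tiling inequality would give `c ≤ ∫ f`. The liminf is handled symmetrically.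
-/

open Topology ENNReal Finset

namespace ENNReal

variable {ι : Type*} {l : Filter ι} {c u : ι → ℝ≥0∞}

theorem limsup_mul_of_tendsto_one (hc : Tendsto c l (𝓝 1)) :
    limsup (fun i => c i * u i) l = limsup u l := by
  rcases l.eq_or_neBot with rfl | _
  · simp
  refine le_antisymm ?_ ?_
  · calc limsup (fun i => c i * u i) l ≤ limsup c l * limsup u l :=
          ENNReal.limsup_mul_le' (by simp [hc.limsup_eq]) (by simp [hc.limsup_eq])
      _ = limsup u l := by rw [hc.limsup_eq, one_mul]
  · calc limsup u l = limsup u l * liminf c l := by rw [hc.liminf_eq, mul_one]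
      _ ≤ limsup (u * c) l := ENNReal.le_limsup_mul
      _ = limsup (fun i => c i * u i) l := by rw [mul_comm]; rfl

theorem liminf_mul_of_tendsto_one (hc : Tendsto c l (𝓝 1)) :
    liminf (fun i => c i * u i) l = liminf u l := by
  rcases l.eq_or_neBot with rfl | _
  · simp
  refine le_antisymm ?_ ?_
  · calc liminf (fun i => c i * u i) l ≤ limsup c l * liminf u l :=
          ENNReal.liminf_mul_le (by simp [hc.limsup_eq]) (by simp [hc.limsup_eq])
      _ = liminf u l := by rw [hc.limsup_eq, one_mul]
  · calc liminf u l = liminf c l * liminf u l := by rw [hc.liminf_eq, one_mul]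
      _ ≤ liminf (fun i => c i * u i) l := ENNReal.le_liminf_mul

end ENNReal

theorem le_of_forall_nat_mul_le_add {u w C : ℝ} (h : ∀ L : ℕ, L * u ≤ L * w + C) : u ≤ w := by
  by_contra! hwu
  obtain ⟨L, hL⟩ := exists_nat_gt (C / (u - w))
  have := (div_lt_iff₀ (sub_pos.2 hwu)).1 hL
  linarith [h L]

/-! ## Covering inequalities for sequences -/

section Covering

theorem exists_le_lt_add_sum_range_nonneg {w : ℕ → ℝ} {N : ℕ}
    (hw : ∀ k, ∃ m, 0 < m ∧ m ≤ N ∧ 0 ≤ ∑ i ∈ range m, w (k + i)) (L : ℕ) :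
    ∃ t ≤ L, L < t + N ∧ 0 ≤ ∑ k ∈ range t, w k := by
  induction L with
  | zero =>
    obtain ⟨m, hm, hmN, -⟩ := hw 0
    exact ⟨0, le_rfl, by omega, by simp⟩
  | succ L ih =>
    obtain ⟨t, htL, hLt, ht⟩ := ih
    by_cases hlt : L + 1 < t + N
    · exact ⟨t, by omega, hlt, ht⟩
    obtain ⟨m, hm, hmN, hblock⟩ := hw t
    refine ⟨t + m, by omega, by omega, ?_⟩
    rw [sum_range_add]
    exact add_nonneg ht hblock

variable {u : ℕ → ℝ} {a : ℝ} {N : ℕ} {s : Set ℕ}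

theorem mul_sub_sum_indicator_compl_le_sum (hu : ∀ k, 0 ≤ u k) (ha : 0 ≤ a) (hN : 0 < N)
    (hs : ∀ k ∈ s, ∃ m, 0 < m ∧ m ≤ N ∧ a * m ≤ ∑ i ∈ range m, u (k + i)) (L : ℕ) :
    a * (L - N - ∑ k ∈ range L, sᶜ.indicator 1 k) ≤ ∑ k ∈ range L, u k := by
  set w : ℕ → ℝ := fun k => u k - a * s.indicator 1 k
  have hind_le : ∀ k, s.indicator (1 : ℕ → ℝ) k ≤ 1 := fun k => s.indicator_le_self' (by simp) k
  have hw : ∀ k, ∃ m, 0 < m ∧ m ≤ N ∧ 0 ≤ ∑ i ∈ range m, w (k + i) := by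
    intro k
    by_cases hk : k ∈ s
    · obtain ⟨m, hm, hmN, hsum⟩ := hs k hk
      have : ∑ i ∈ range m, a * s.indicator 1 (k + i) ≤ a * m :=
        (sum_le_sum fun i _ => mul_le_of_le_one_right ha (hind_le (k + i))).trans_eq
          (by simp [mul_comm])
      refine ⟨m, hm, hmN, ?_⟩
      simp only [w, sum_sub_distrib]
      linarith
    · exact ⟨1, one_pos, hN, by simp [w, hk, hu k]⟩
  have hcount : ∑ k ∈ range L, s.indicator (1 : ℕ → ℝ) k + ∑ k ∈ range L, sᶜ.indicator 1 k = L := by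
    simp [← sum_add_distrib, Set.indicator_self_add_compl_apply]
  have hwL : ∑ k ∈ range L, w k = ∑ k ∈ range L, u k - a * ∑ k ∈ range L, s.indicator 1 k := by
    simp only [w, sum_sub_distrib, mul_sum]
  obtain ⟨t, htL, hLt, ht⟩ := exists_le_lt_add_sum_range_nonneg hw L
  obtain ⟨r, rfl⟩ := Nat.exists_eq_add_of_le htL
  have htail : -(a * N) ≤ ∑ i ∈ range r, w (t + i) := by
    have hwa : ∀ i ∈ range r, -a ≤ w (t + i) := fun i _ => by
      linarith [hu (t + i), mul_le_of_le_one_right ha (hind_le (t + i))]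
    have := card_nsmul_le_sum _ _ _ hwa
    simp only [card_range, nsmul_eq_mul] at this
    nlinarith [(Nat.cast_le (α := ℝ)).2 (by omega : r ≤ N)]
  rw [sum_range_add] at hwL
  linarith [congrArg (a * ·) hcount]

theorem sum_le_mul_add_sum_indicator_compl (hu : ∀ k, 0 ≤ u k) (ha : 0 ≤ a) (hN : 0 < N)
    (hs : ∀ k ∈ s, ∃ m, 0 < m ∧ m ≤ N ∧ ∑ i ∈ range m, u (k + i) ≤ a * m) (L : ℕ) :
    ∑ k ∈ range L, u k ≤ a * (L + N) + ∑ k ∈ range L, sᶜ.indicator u k := by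
  set w : ℕ → ℝ := fun k => a - s.indicator u k
  have hw : ∀ k, ∃ m, 0 < m ∧ m ≤ N ∧ 0 ≤ ∑ i ∈ range m, w (k + i) := by
    intro k
    by_cases hk : k ∈ s
    · obtain ⟨m, hm, hmN, hsum⟩ := hs k hk
      have : ∑ i ∈ range m, s.indicator u (k + i) ≤ ∑ i ∈ range m, u (k + i) :=
        sum_le_sum fun i _ => s.indicator_le_self' (fun j _ => hu j) _
      refine ⟨m, hm, hmN, ?_⟩
      simp only [w, sum_sub_distrib, sum_const, card_range, nsmul_eq_mul]
      linarith
    · exact ⟨1, one_pos, hN, by simp [w, hk, ha]⟩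
  obtain ⟨t, htL, hLt, ht⟩ := exists_le_lt_add_sum_range_nonneg hw (L + N)
  have hmono : ∑ k ∈ range L, s.indicator u k ≤ ∑ k ∈ range t, s.indicator u k :=
    sum_le_sum_of_subset_of_nonneg (range_subset_range.2 (by omega))
      fun k _ _ => s.indicator_nonneg (fun j _ => hu j) k
  have ht' : ∑ k ∈ range t, s.indicator u k ≤ a * t := by
    simpa [w, sum_sub_distrib, mul_comm] using ht
  have hat : a * t ≤ a * (L + N) := by
    gcongr
    exact_mod_cast htL
  have hsplit : ∑ k ∈ range L, u k
      = ∑ k ∈ range L, s.indicator u k + ∑ k ∈ range L, sᶜ.indicator u k := by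
    simp [← sum_add_distrib, Set.indicator_self_add_compl_apply]
  linarith

end Covering

/-! ## Birkhoff's ergodic theorem for nonnegative functions -/

section BirkhoffAverage

variable {α : Type*} {g : α → α} {f : α → ℝ}

theorem birkhoffSum_iterate_apply (m k : ℕ) (x : α) :
    birkhoffSum g f m (g^[k] x) = ∑ i ∈ range m, f (g^[k + i] x) :=
  sum_congr rfl fun i _ => by rw [← Function.iterate_add_apply, add_comm]

theorem birkhoffAverage_nonneg (hf0 : ∀ x, 0 ≤ f x) (n : ℕ) (x : α) :
    0 ≤ birkhoffAverage ℝ g f n x :=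
  smul_nonneg (by positivity) (sum_nonneg fun k _ => hf0 _)

-- Averages are compared in `ℝ≥0∞`, where `limsup` and `liminf` of unbounded sequences are not
-- junk values.
theorem exists_ofReal_birkhoffAverage_succ_eq (hf0 : ∀ x, 0 ≤ f x) (x : α) :
    ∃ d c : ℕ → ℝ≥0∞, Tendsto d atTop (𝓝 0) ∧ Tendsto c atTop (𝓝 1) ∧
      ∀ n, ENNReal.ofReal (birkhoffAverage ℝ g f (n + 1) x)
        = d n + c n * ENNReal.ofReal (birkhoffAverage ℝ g f n (g x)) := by
  refine ⟨fun n => ENNReal.ofReal (f x / (n + 1)), fun n => ENNReal.ofReal (n / (n + 1)), ?_, ?_,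
    fun n => ?_⟩
  · simpa [div_eq_mul_one_div (f x)] using
      ENNReal.tendsto_ofReal (tendsto_one_div_add_atTop_nhds_zero_nat.const_mul (f x))
  · simpa using ENNReal.tendsto_ofReal (tendsto_natCast_div_add_atTop (1 : ℝ))
  rw [← ENNReal.ofReal_mul (by positivity),
    ← ENNReal.ofReal_add (div_nonneg (hf0 x) (by positivity))
      (mul_nonneg (by positivity) (birkhoffAverage_nonneg hf0 n (g x)))]
  congr 1
  rcases n.eq_zero_or_pos with rfl | hn
  · simp [birkhoffAverage]
  simp only [birkhoffAverage, birkhoffSum_succ', smul_eq_mul]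
  push_cast
  field_simp

theorem limsup_ofReal_birkhoffAverage_apply (hf0 : ∀ x, 0 ≤ f x) (x : α) :
    limsup (fun n => ENNReal.ofReal (birkhoffAverage ℝ g f n (g x))) atTop
      = limsup (fun n => ENNReal.ofReal (birkhoffAverage ℝ g f n x)) atTop := by
  obtain ⟨d, c, hd, hc, hsucc⟩ := exists_ofReal_birkhoffAverage_succ_eq (g := g) hf0 x
  conv_rhs => rw [← limsup_nat_add _ 1]
  simp only [hsucc]
  exact ((ENNReal.limsup_add_of_left_tendsto_zero hd _).trans
    (ENNReal.limsup_mul_of_tendsto_one hc)).symm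

theorem liminf_ofReal_birkhoffAverage_apply (hf0 : ∀ x, 0 ≤ f x) (x : α) :
    liminf (fun n => ENNReal.ofReal (birkhoffAverage ℝ g f n (g x))) atTop
      = liminf (fun n => ENNReal.ofReal (birkhoffAverage ℝ g f n x)) atTop := by
  obtain ⟨d, c, hd, hc, hsucc⟩ := exists_ofReal_birkhoffAverage_succ_eq (g := g) hf0 x
  conv_rhs => rw [← liminf_nat_add _ 1]
  simp only [hsucc]
  exact ((ENNReal.liminf_add_of_left_tendsto_zero hd _).trans
    (ENNReal.liminf_mul_of_tendsto_one hc)).symm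

theorem exists_mul_lt_birkhoffSum_of_lt_limsup {c : ℝ} {x : α}
    (h : ENNReal.ofReal c < limsup (fun n => ENNReal.ofReal (birkhoffAverage ℝ g f n x)) atTop) :
    ∃ n, 0 < n ∧ c * n < birkhoffSum g f n x := by
  obtain ⟨n, hn, hlt⟩ :=
    (frequently_lt_of_lt_limsup (by isBoundedDefault) h).forall_exists_of_atTop 1
  have hn' : (0 : ℝ) < n := by exact_mod_cast hn
  have := ((ENNReal.ofReal_lt_ofReal_iff').1 hlt).1
  rw [birkhoffAverage, smul_eq_mul, inv_mul_eq_div, lt_div_iff₀ hn'] at this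
  exact ⟨n, hn, this⟩

theorem exists_birkhoffSum_lt_mul_of_liminf_lt (hf0 : ∀ x, 0 ≤ f x) {c : ℝ} {x : α}
    (h : liminf (fun n => ENNReal.ofReal (birkhoffAverage ℝ g f n x)) atTop < ENNReal.ofReal c) :
    ∃ n, 0 < n ∧ birkhoffSum g f n x < c * n := by
  obtain ⟨n, hn, hlt⟩ :=
    (frequently_lt_of_liminf_lt (by isBoundedDefault) h).forall_exists_of_atTop 1
  have hn' : (0 : ℝ) < n := by exact_mod_cast hn
  have := (ENNReal.ofReal_lt_ofReal_iff_of_nonneg (birkhoffAverage_nonneg hf0 n x)).1 hlt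
  rw [birkhoffAverage, smul_eq_mul, inv_mul_eq_div, div_lt_iff₀ hn'] at this
  exact ⟨n, hn, this⟩

end BirkhoffAverage

section Birkhoff

variable {α : Type*} [MeasurableSpace α] {μ : Measure α} {g : α → α} {f : α → ℝ}

theorem measurable_birkhoffSum (hg : Measurable g) (hf : Measurable f) (n : ℕ) :
    Measurable (birkhoffSum g f n) :=
  Finset.measurable_fun_sum _ fun k _ => hf.comp (hg.iterate k)

theorem measurable_birkhoffAverage (hg : Measurable g) (hf : Measurable f) (n : ℕ) :
    Measurable (birkhoffAverage ℝ g f n) :=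
  (measurable_birkhoffSum hg hf n).const_smul ((n : ℝ)⁻¹)

theorem MeasureTheory.MeasurePreserving.integral_comp_of_integrable (hg : MeasurePreserving g μ μ)
    (hf : Integrable f μ) : ∫ x, f (g x) ∂μ = ∫ x, f x ∂μ := by
  have hf' : AEStronglyMeasurable f (μ.map g) := by rw [hg.map_eq]; exact hf.1
  rw [← integral_map hg.aemeasurable hf', hg.map_eq]

theorem MeasureTheory.MeasurePreserving.integrable_birkhoffSum (hg : MeasurePreserving g μ μ)
    (hf : Integrable f μ) (n : ℕ) : Integrable (birkhoffSum g f n) μ :=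
  integrable_finsetSum _ fun k _ => (hg.iterate k).integrable_comp_of_integrable hf

theorem MeasureTheory.MeasurePreserving.integral_birkhoffSum (hg : MeasurePreserving g μ μ)
    (hf : Integrable f μ) (n : ℕ) : ∫ x, birkhoffSum g f n x ∂μ = n * ∫ x, f x ∂μ := by
  simp only [birkhoffSum]
  rw [integral_finsetSum (f := fun k x => f (g^[k] x)) _
    fun k _ => (hg.iterate k).integrable_comp_of_integrable hf]
  simp [(hg.iterate _).integral_comp_of_integrable hf]

theorem tendsto_measure_compl_of_ae_mem_iUnion [IsFiniteMeasure μ] {E : ℕ → Set α}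
    (hE : ∀ N, MeasurableSet (E N)) (hmono : Monotone E) (hae : ∀ᵐ x ∂μ, x ∈ ⋃ N, E N) :
    Tendsto (fun N => μ (E N)ᶜ) atTop (𝓝 0) := by
  have hnull : μ (⋂ N, (E N)ᶜ) = 0 := by
    rw [← Set.compl_iUnion]
    exact ae_iff.1 hae
  simpa [hnull, Function.comp_def] using
    tendsto_measure_iInter_atTop (fun N => (hE N).compl.nullMeasurableSet)
      (fun _ _ h => Set.compl_subset_compl.2 (hmono h)) ⟨0, measure_ne_top μ _⟩

variable [IsProbabilityMeasure μ]

theorem MeasureTheory.MeasurePreserving.mul_one_sub_measureReal_compl_le_integral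
    (hg : MeasurePreserving g μ μ) (hf0 : ∀ x, 0 ≤ f x) (hf : Integrable f μ) {c : ℝ}
    (hc : 0 ≤ c) {E : Set α} (hE : MeasurableSet E) {N : ℕ} (hN : 0 < N)
    (hEN : ∀ x ∈ E, ∃ m, 0 < m ∧ m ≤ N ∧ c * m ≤ birkhoffSum g f m x) :
    c * (1 - μ.real Eᶜ) ≤ ∫ x, f x ∂μ := by
  have hind : Integrable (Eᶜ.indicator (1 : α → ℝ)) μ := (integrable_const 1).indicator hE.compl
  refine le_of_forall_nat_mul_le_add (C := c * N) fun L => ?_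
  have hpt : ∀ x, c * (L - N - birkhoffSum g (Eᶜ.indicator 1) L x) ≤ birkhoffSum g f L x := by
    intro x
    have := mul_sub_sum_indicator_compl_le_sum (u := fun k => f (g^[k] x))
      (s := (fun k => g^[k] x) ⁻¹' E) (fun k => hf0 _) hc hN
      (fun k hk => by simpa only [birkhoffSum_iterate_apply] using hEN _ hk) L
    simp only [← Set.preimage_compl] at this
    exact this
  have hint := integral_mono (integrable_const (c * L - c * N))
    (g := fun x => birkhoffSum g f L x + c * birkhoffSum g (Eᶜ.indicator 1) L x)
    ((hg.integrable_birkhoffSum hf L).add ((hg.integrable_birkhoffSum hind L).const_mul c))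
    (fun x => by linarith [hpt x])
  rw [integral_const, integral_add (hg.integrable_birkhoffSum hf L)
    ((hg.integrable_birkhoffSum hind L).const_mul c), integral_const_mul,
    hg.integral_birkhoffSum hf, hg.integral_birkhoffSum hind, integral_indicator_one hE.compl]
    at hint
  simp only [probReal_univ, one_smul] at hint
  linarith

theorem MeasureTheory.MeasurePreserving.integral_le_add_setIntegral_compl
    (hg : MeasurePreserving g μ μ) (hf0 : ∀ x, 0 ≤ f x) (hf : Integrable f μ) {c : ℝ}
    (hc : 0 ≤ c) {E : Set α} (hE : MeasurableSet E) {N : ℕ} (hN : 0 < N)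
    (hEN : ∀ x ∈ E, ∃ m, 0 < m ∧ m ≤ N ∧ birkhoffSum g f m x ≤ c * m) :
    ∫ x, f x ∂μ ≤ c + ∫ x in Eᶜ, f x ∂μ := by
  have hind : Integrable (Eᶜ.indicator f) μ := hf.indicator hE.compl
  refine le_of_forall_nat_mul_le_add (C := c * N) fun L => ?_
  have hpt : ∀ x, birkhoffSum g f L x ≤ c * (L + N) + birkhoffSum g (Eᶜ.indicator f) L x := by
    intro x
    have := sum_le_mul_add_sum_indicator_compl (u := fun k => f (g^[k] x))
      (s := (fun k => g^[k] x) ⁻¹' E) (fun k => hf0 _) hc hN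
      (fun k hk => by simpa only [birkhoffSum_iterate_apply] using hEN _ hk) L
    simp only [← Set.preimage_compl] at this
    exact this
  have hint := integral_mono (hg.integrable_birkhoffSum hf L)
    (g := fun x => c * (L + N) + birkhoffSum g (Eᶜ.indicator f) L x)
    ((integrable_const (c * (L + N))).add (hg.integrable_birkhoffSum hind L)) hpt
  rw [integral_add (integrable_const _) (hg.integrable_birkhoffSum hind L), integral_const,
    hg.integral_birkhoffSum hf, hg.integral_birkhoffSum hind, integral_indicator hE.compl]
    at hint
  simp only [probReal_univ, one_smul] at hint
  linarith

theorem Ergodic.ae_limsup_ofReal_birkhoffAverage_le (herg : Ergodic g μ) (hf : Measurable f)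
    (hf0 : ∀ x, 0 ≤ f x) (hfi : Integrable f μ) :
    ∀ᵐ x ∂μ, limsup (fun n => ENNReal.ofReal (birkhoffAverage ℝ g f n x)) atTop
      ≤ ENNReal.ofReal (∫ x, f x ∂μ) := by
  have hφ : Measurable fun x =>
      limsup (fun n => ENNReal.ofReal (birkhoffAverage ℝ g f n x)) atTop :=
    Measurable.limsup fun n =>
      ENNReal.measurable_ofReal.comp (measurable_birkhoffAverage herg.measurable hf n)
  obtain ⟨a, ha⟩ := herg.ae_eq_const_of_ae_eq_comp₀ hφ.nullMeasurable
    (Eventually.of_forall fun x => limsup_ofReal_birkhoffAverage_apply hf0 x)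
  suffices a ≤ ENNReal.ofReal (∫ x, f x ∂μ) by
    filter_upwards [ha] with x hx
    exact hx.trans_le this
  by_contra! hlt
  obtain ⟨c, hc, hIc, hca⟩ := ENNReal.lt_iff_exists_real_btwn.1 hlt
  set E : ℕ → Set α := fun N => {x | ∃ m, 0 < m ∧ m ≤ N ∧ c * m ≤ birkhoffSum g f m x}
  have hE : ∀ N, MeasurableSet (E N) := fun N => by
    have := measurable_birkhoffSum herg.measurable hf
    measurability
  have hae : ∀ᵐ x ∂μ, x ∈ ⋃ N, E N := by
    filter_upwards [ha] with x hx
    obtain ⟨n, hn, hlt⟩ := exists_mul_lt_birkhoffSum_of_lt_limsup (hca.trans_eq hx.symm)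
    exact Set.mem_iUnion.2 ⟨n, n, hn, le_rfl, hlt.le⟩
  have hlim := (ENNReal.tendsto_toReal ENNReal.zero_ne_top).comp
    (tendsto_measure_compl_of_ae_mem_iUnion hE
      (fun N N' h x ⟨m, hm, hmN, hx⟩ => ⟨m, hm, hmN.trans h, hx⟩) hae)
  have hcI : c * (1 - (0 : ℝ≥0∞).toReal) ≤ ∫ x, f x ∂μ :=
    le_of_tendsto ((tendsto_const_nhds.sub hlim).const_mul c) ((eventually_ge_atTop 1).mono
      fun N hN => herg.toMeasurePreserving.mul_one_sub_measureReal_compl_le_integral hf0 hfi hc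
        (hE N) hN fun x hx => hx)
  rw [ENNReal.toReal_zero, sub_zero, mul_one] at hcI
  exact absurd hIc (not_lt.2 (ENNReal.ofReal_le_ofReal hcI))

theorem Ergodic.ae_ofReal_integral_le_liminf_birkhoffAverage (herg : Ergodic g μ)
    (hf : Measurable f) (hf0 : ∀ x, 0 ≤ f x) (hfi : Integrable f μ) :
    ∀ᵐ x ∂μ, ENNReal.ofReal (∫ x, f x ∂μ)
      ≤ liminf (fun n => ENNReal.ofReal (birkhoffAverage ℝ g f n x)) atTop := by
  have hψ : Measurable fun x =>
      liminf (fun n => ENNReal.ofReal (birkhoffAverage ℝ g f n x)) atTop :=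
    Measurable.liminf fun n =>
      ENNReal.measurable_ofReal.comp (measurable_birkhoffAverage herg.measurable hf n)
  obtain ⟨b, hb⟩ := herg.ae_eq_const_of_ae_eq_comp₀ hψ.nullMeasurable
    (Eventually.of_forall fun x => liminf_ofReal_birkhoffAverage_apply hf0 x)
  suffices ENNReal.ofReal (∫ x, f x ∂μ) ≤ b by
    filter_upwards [hb] with x hx
    exact this.trans_eq hx.symm
  by_contra! hlt
  obtain ⟨c, hc, hbc, hcI⟩ := ENNReal.lt_iff_exists_real_btwn.1 hlt
  set E : ℕ → Set α := fun N => {x | ∃ m, 0 < m ∧ m ≤ N ∧ birkhoffSum g f m x ≤ c * m}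
  have hE : ∀ N, MeasurableSet (E N) := fun N => by
    have := measurable_birkhoffSum herg.measurable hf
    measurability
  have hae : ∀ᵐ x ∂μ, x ∈ ⋃ N, E N := by
    filter_upwards [hb] with x hx
    obtain ⟨n, hn, hlt⟩ := exists_birkhoffSum_lt_mul_of_liminf_lt hf0 (hx.trans_lt hbc)
    exact Set.mem_iUnion.2 ⟨n, n, hn, le_rfl, hlt.le⟩
  have hlim := hfi.tendsto_setIntegral_nhds_zero (tendsto_measure_compl_of_ae_mem_iUnion hE
    (fun N N' h x ⟨m, hm, hmN, hx⟩ => ⟨m, hm, hmN.trans h, hx⟩) hae)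
  have hIc : ∫ x, f x ∂μ ≤ c + 0 :=
    ge_of_tendsto (tendsto_const_nhds.add hlim) ((eventually_ge_atTop 1).mono
      fun N hN => herg.toMeasurePreserving.integral_le_add_setIntegral_compl hf0 hfi hc
        (hE N) hN fun x hx => hx)
  rw [add_zero] at hIc
  exact absurd hcI (not_lt.2 (ENNReal.ofReal_le_ofReal hIc))

theorem Ergodic.ae_tendsto_birkhoffAverage_of_nonneg (herg : Ergodic g μ) (hf : Measurable f)
    (hf0 : ∀ x, 0 ≤ f x) (hfi : Integrable f μ) :
    ∀ᵐ x ∂μ, Tendsto (fun n => birkhoffAverage ℝ g f n x) atTop (𝓝 (∫ x, f x ∂μ)) := by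
  filter_upwards [herg.ae_limsup_ofReal_birkhoffAverage_le hf hf0 hfi,
    herg.ae_ofReal_integral_le_liminf_birkhoffAverage hf hf0 hfi] with x hsup hinf
  have := (ENNReal.tendsto_toReal ENNReal.ofReal_ne_top).comp
    (tendsto_of_le_liminf_of_limsup_le hinf hsup)
  simpa [Function.comp_def, ENNReal.toReal_ofReal (birkhoffAverage_nonneg hf0 _ x),
    ENNReal.toReal_ofReal (integral_nonneg hf0)] using this

end Birkhoff

/-! ## Mixing implies ergodicity -/

section Mixing

open scoped symmDiff

theorem Set.inter_symmDiff_inter_subset {α : Type*} (a b c d : Set α) :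
    (a ∩ b) ∆ (c ∩ d) ⊆ a ∆ c ∪ b ∆ d := by
  intro x
  simp only [Set.mem_symmDiff, Set.mem_union, Set.mem_inter_iff]
  tauto

variable {α : Type*} [MeasurableSpace α] {μ : Measure α} [IsProbabilityMeasure μ] {T : α → α}

theorem MeasureTheory.MeasurePreserving.abs_measureReal_sub_inter_preimage_iterate_le
    (hT : MeasurePreserving T μ μ) {s A : Set α} (hs : MeasurableSet s) (hsT : T ⁻¹' s = s)
    (hA : MeasurableSet A) (k : ℕ) :
    |μ.real s - μ.real (A ∩ T^[k] ⁻¹' A)| ≤ 2 * μ.real (s ∆ A) := by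
  have hsk : T^[k] ⁻¹' s = s := by
    rw [Set.preimage_iterate_eq]
    exact Function.iterate_fixed hsT k
  have hTk : Measurable T^[k] := hT.measurable.iterate k
  calc |μ.real s - μ.real (A ∩ T^[k] ⁻¹' A)|
      = |μ.real (s ∩ T^[k] ⁻¹' s) - μ.real (A ∩ T^[k] ⁻¹' A)| := by rw [hsk, Set.inter_self]
    _ ≤ μ.real ((s ∩ T^[k] ⁻¹' s) ∆ (A ∩ T^[k] ⁻¹' A)) :=
        abs_measureReal_sub_le_measureReal_symmDiff (hs.inter (hTk hs)).nullMeasurableSet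
          (hA.inter (hTk hA)).nullMeasurableSet
    _ ≤ μ.real (s ∆ A) + μ.real (T^[k] ⁻¹' (s ∆ A)) :=
        (measureReal_mono (Set.inter_symmDiff_inter_subset _ _ _ _)).trans
          (measureReal_union_le _ _)
    _ = 2 * μ.real (s ∆ A) := by
        rw [(hT.iterate k).measureReal_preimage (hs.symmDiff hA).nullMeasurableSet]
        ring

theorem MeasureTheory.MeasurePreserving.measureReal_eq_sq_of_preimage_eq
    (hT : MeasurePreserving T μ μ) {𝒜 : Set (Set α)} (h𝒜 : IsSetAlgebra 𝒜)
    (hgen : ‹MeasurableSpace α› = MeasurableSpace.generateFrom 𝒜)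
    (hmix : ∀ A ∈ 𝒜, Tendsto (fun k => μ.real (A ∩ T^[k] ⁻¹' A)) atTop (𝓝 (μ.real A ^ 2)))
    {s : Set α} (hs : MeasurableSet s) (hsT : T ⁻¹' s = s) :
    μ.real s = μ.real s ^ 2 := by
  have hdense := Measure.MeasureDense.of_generateFrom_isSetAlgebra_finite μ h𝒜 hgen
  refine eq_of_forall_dist_le fun ε hε => ?_
  obtain ⟨A, hA𝒜, hsA⟩ := hdense.approx s hs (measure_ne_top μ s) (ε / 4) (by positivity)
  have hA : MeasurableSet A := hdense.measurable A hA𝒜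
  set δ := μ.real (s ∆ A)
  have hδ : δ < ε / 4 := ENNReal.toReal_lt_of_lt_ofReal hsA
  have hp : |μ.real s - μ.real A| ≤ δ :=
    abs_measureReal_sub_le_measureReal_symmDiff hs.nullMeasurableSet hA.nullMeasurableSet
  have hq : |μ.real s - μ.real A ^ 2| ≤ 2 * δ :=
    le_of_tendsto (tendsto_const_nhds.sub (hmix A hA𝒜)).abs
      (Eventually.of_forall (hT.abs_measureReal_sub_inter_preimage_iterate_le hs hsT hA))
  have hsq : |μ.real A ^ 2 - μ.real s ^ 2| ≤ 2 * δ := by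
    have hsum : |μ.real A + μ.real s| ≤ 2 := by
      rw [abs_of_nonneg (by positivity)]
      linarith [measureReal_le_one (μ := μ) (s := A), measureReal_le_one (μ := μ) (s := s)]
    calc |μ.real A ^ 2 - μ.real s ^ 2| = |μ.real s - μ.real A| * |μ.real A + μ.real s| := by
          rw [← abs_mul, abs_sub_comm]; congr 1; ring
      _ ≤ δ * 2 := mul_le_mul hp hsum (abs_nonneg _) measureReal_nonneg
      _ = 2 * δ := mul_comm _ _
  rw [Real.dist_eq]
  linarith [abs_sub_le (μ.real s) (μ.real A ^ 2) (μ.real s ^ 2)]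

theorem eventuallyConst_ae_of_measureReal_eq_sq {s : Set α} (hs : MeasurableSet s)
    (h : μ.real s = μ.real s ^ 2) : EventuallyConst s (ae μ) := by
  rw [eventuallyConst_set', ae_eq_empty, ae_eq_univ]
  rcases mul_eq_zero.1 (show μ.real s * (1 - μ.real s) = 0 by linear_combination h) with h0 | h1
  · exact Or.inl ((measureReal_eq_zero_iff).1 h0)
  · refine Or.inr ((measureReal_eq_zero_iff).1 ?_)
    rw [measureReal_compl hs, probReal_univ]
    linarith

theorem MeasureTheory.MeasurePreserving.ergodic_of_tendsto_measureReal_inter_preimage_iterate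
    (hT : MeasurePreserving T μ μ) {𝒜 : Set (Set α)} (h𝒜 : IsSetAlgebra 𝒜)
    (hgen : ‹MeasurableSpace α› = MeasurableSpace.generateFrom 𝒜)
    (hmix : ∀ A ∈ 𝒜, Tendsto (fun k => μ.real (A ∩ T^[k] ⁻¹' A)) atTop (𝓝 (μ.real A ^ 2))) :
    Ergodic T μ :=
  ⟨hT, ⟨fun _ hs hsT => eventuallyConst_ae_of_measureReal_eq_sq hs
    (hT.measureReal_eq_sq_of_preimage_eq h𝒜 hgen hmix hs hsT)⟩⟩

end Mixing

/-! ## The shift on path space -/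

section PathSpace

variable {β : Type*}

def leftShift (y : ℕ → β) : ℕ → β := fun n => y (n + 1)

def initialSegment (j : ℕ) (y : ℕ → β) : Fin (j + 1) → β := fun l => y l

theorem leftShift_iterate_apply (k : ℕ) (y : ℕ → β) (n : ℕ) : leftShift^[k] y n = y (n + k) := by
  induction k generalizing y with
  | zero => rfl
  | succ k ih =>
    rw [Function.iterate_succ_apply, ih]
    simp only [leftShift]
    ring_nf

theorem initialSegment_leftShift_iterate {Ω : Type*} (X : ℕ → Ω → β) (j k : ℕ) (ω : Ω) :
    initialSegment j (leftShift^[k] fun n => X n ω) = fun l : Fin (j + 1) => X (k + l) ω := by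
  funext l
  simp only [initialSegment, leftShift_iterate_apply, add_comm]

variable [MeasurableSpace β]

theorem measurable_leftShift : Measurable (leftShift : (ℕ → β) → ℕ → β) :=
  measurable_pi_lambda _ fun n => measurable_pi_apply (n + 1)

theorem measurable_initialSegment (j : ℕ) : Measurable (initialSegment j : (ℕ → β) → _) :=
  measurable_pi_lambda _ fun _ => measurable_pi_apply _

theorem exists_eq_initialSegment_preimage {A : Set (ℕ → β)}
    (hA : A ∈ measurableCylinders fun _ : ℕ => β) :
    ∃ j, ∃ S : Set (Fin (j + 1) → β), MeasurableSet S ∧ A = initialSegment j ⁻¹' S := by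
  obtain ⟨s, S, hS, rfl⟩ := (mem_measurableCylinders A).1 hA
  have hs : ∀ i ∈ s, i < s.sup id + 1 := fun i hi => Nat.lt_succ_of_le (le_sup (f := id) hi)
  exact ⟨s.sup id, (fun v (i : s) => v ⟨i, hs i i.2⟩) ⁻¹' S,
    (measurable_pi_lambda _ fun i => measurable_pi_apply _) hS, rfl⟩

end PathSpace

section StationaryProcess

variable {Ω : Type*} [MeasurableSpace Ω] {P : Measure Ω}

def IsStrictlyStationary (X : ℕ → Ω → ℝ) (P : Measure Ω) : Prop :=
  ∀ i j : ℕ, Measure.map (fun ω (l : Fin (j + 1)) => X (i + l) ω) P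
    = Measure.map (fun ω (l : Fin (j + 1)) => X l ω) P

def IsMixing (X : ℕ → Ω → ℝ) (P : Measure Ω) : Prop :=
  ∀ (n m : ℕ) (f : (Fin (n + 1) → ℝ) → ℝ) (g : (Fin (m + 1) → ℝ) → ℝ),
    Measurable f → Measurable g → (∃ Cf, ∀ x, |f x| ≤ Cf) → (∃ Cg, ∀ x, |g x| ≤ Cg) →
    Tendsto (fun k => ∫ ω, f (fun l => X l ω) * g (fun l => X (k + l) ω) ∂P) atTop
      (𝓝 ((∫ ω, f (fun l => X l ω) ∂P) * ∫ ω, g (fun l => X l ω) ∂P))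

theorem integral_indicator_one_comp {γ : Type*} [MeasurableSpace γ] {W : Ω → γ}
    (hW : Measurable W) {S : Set γ} (hS : MeasurableSet S) :
    ∫ ω, S.indicator 1 (W ω) ∂P = P.real (W ⁻¹' S) :=
  integral_indicator_one (hW hS)

theorem integral_indicator_one_comp_mul {γ : Type*} [MeasurableSpace γ] {W V : Ω → γ}
    (hW : Measurable W) (hV : Measurable V) {S : Set γ} (hS : MeasurableSet S) :
    ∫ ω, S.indicator 1 (W ω) * S.indicator 1 (V ω) ∂P = P.real (W ⁻¹' S ∩ V ⁻¹' S) := by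
  rw [← integral_indicator_one ((hW hS).inter (hV hS)), Set.inter_indicator_one]
  rfl

variable {X : ℕ → Ω → ℝ}

theorem measurePreserving_leftShift_map [IsFiniteMeasure P] (hX : ∀ i, Measurable (X i))
    (hstat : IsStrictlyStationary X P) :
    MeasurePreserving leftShift (P.map fun ω n => X n ω) (P.map fun ω n => X n ω) := by
  have hΦ : Measurable fun ω n => X n ω := measurable_pi_lambda _ hX
  refine ⟨measurable_leftShift, ext_of_generate_finite _ generateFrom_measurableCylinders.symm
    isPiSystem_measurableCylinders (fun A hA => ?_) ?_⟩
  · obtain ⟨j, S, hS, rfl⟩ := exists_eq_initialSegment_preimage hA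
    have hpre : (fun ω n => X n ω) ⁻¹' (leftShift ⁻¹' (initialSegment j ⁻¹' S))
        = (fun ω (l : Fin (j + 1)) => X (1 + l) ω) ⁻¹' S := by
      ext ω
      simp [← initialSegment_leftShift_iterate X j 1]
    rw [Measure.map_apply measurable_leftShift (measurable_initialSegment j hS),
      Measure.map_apply hΦ (measurable_leftShift (measurable_initialSegment j hS)), hpre,
      ← Measure.map_apply (measurable_pi_lambda _ fun _ => hX _) hS, hstat 1 j,
      Measure.map_apply (measurable_pi_lambda _ fun _ => hX _) hS,
      Measure.map_apply hΦ (measurable_initialSegment j hS)]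
    rfl
  · rw [Measure.map_apply measurable_leftShift MeasurableSet.univ, Set.preimage_univ]

theorem IsMixing.tendsto_measureReal_inter (hX : ∀ i, Measurable (X i)) (hmix : IsMixing X P)
    {j : ℕ} {S : Set (Fin (j + 1) → ℝ)} (hS : MeasurableSet S) :
    Tendsto (fun k => P.real ((fun ω (l : Fin (j + 1)) => X l ω) ⁻¹' S
        ∩ (fun ω (l : Fin (j + 1)) => X (k + l) ω) ⁻¹' S)) atTop
      (𝓝 (P.real ((fun ω (l : Fin (j + 1)) => X l ω) ⁻¹' S) ^ 2)) := by
  have hbdd : ∃ C, ∀ x, |S.indicator (1 : (Fin (j + 1) → ℝ) → ℝ) x| ≤ C :=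
    ⟨1, fun x => by by_cases hx : x ∈ S <;> simp [hx]⟩
  have h0 : Measurable fun ω (l : Fin (j + 1)) => X l ω := measurable_pi_lambda _ fun _ => hX _
  have hW : ∀ k, Measurable fun ω (l : Fin (j + 1)) => X (k + l) ω :=
    fun k => measurable_pi_lambda _ fun _ => hX _
  have := (hmix j j _ _ (measurable_one.indicator hS) (measurable_one.indicator hS) hbdd hbdd).congr
    fun k => integral_indicator_one_comp_mul h0 (hW k) hS
  rwa [integral_indicator_one_comp h0 hS, ← sq] at this

theorem IsMixing.tendsto_measureReal_inter_leftShift_preimage (hX : ∀ i, Measurable (X i))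
    (hmix : IsMixing X P) {A : Set (ℕ → ℝ)} (hA : A ∈ measurableCylinders fun _ : ℕ => ℝ) :
    Tendsto (fun k => (P.map fun ω n => X n ω).real (A ∩ leftShift^[k] ⁻¹' A)) atTop
      (𝓝 ((P.map fun ω n => X n ω).real A ^ 2)) := by
  have hΦ : Measurable fun ω n => X n ω := measurable_pi_lambda _ hX
  obtain ⟨j, S, hS, rfl⟩ := exists_eq_initialSegment_preimage hA
  have hC := measurable_initialSegment j hS
  have hpre : ∀ k, (fun ω n => X n ω) ⁻¹' (leftShift^[k] ⁻¹' (initialSegment j ⁻¹' S))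
      = (fun ω (l : Fin (j + 1)) => X (k + l) ω) ⁻¹' S := fun k => by
    ext ω
    simp [← initialSegment_leftShift_iterate X j k]
  simp only [map_measureReal_apply hΦ hC,
    map_measureReal_apply hΦ (hC.inter ((measurable_leftShift.iterate _) hC)),
    Set.preimage_inter, hpre]
  exact hmix.tendsto_measureReal_inter hX hS

theorem ergodic_leftShift_map [IsProbabilityMeasure P] (hX : ∀ i, Measurable (X i))
    (hstat : IsStrictlyStationary X P) (hmix : IsMixing X P) :
    Ergodic leftShift (P.map fun ω n => X n ω) :=
  have := Measure.isProbabilityMeasure_map (measurable_pi_lambda _ hX).aemeasurable (μ := P)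
  (measurePreserving_leftShift_map hX hstat).ergodic_of_tendsto_measureReal_inter_preimage_iterate
    isSetAlgebra_measurableCylinders generateFrom_measurableCylinders.symm
    fun _ hA => hmix.tendsto_measureReal_inter_leftShift_preimage hX hA

end StationaryProcess

theorem stmt3 {Ω : Type*} [MeasureSpace Ω] [IsProbabilityMeasure (ℙ : Measure Ω)]
    (X : ℕ → Ω → ℝ)
    (hmeas : ∀ i, Measurable (X i))
    (hnonneg : ∀ i, ∀ᵐ ω ∂ℙ, 0 ≤ X i ω)
    (hint : ∀ i, Integrable (X i) ℙ)
    (hstat : ∀ i j : ℕ,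
      Measure.map (fun ω (l : Fin (j + 1)) => X (i + l) ω) ℙ
        = Measure.map (fun ω (l : Fin (j + 1)) => X l ω) ℙ)
    (hmix : ∀ (n m : ℕ) (f : (Fin (n + 1) → ℝ) → ℝ) (g : (Fin (m + 1) → ℝ) → ℝ),
      Measurable f → Measurable g →
      (∃ Cf, ∀ x, |f x| ≤ Cf) → (∃ Cg, ∀ x, |g x| ≤ Cg) →
      Tendsto
        (fun k => ∫ ω, f (fun l => X l ω) * g (fun l => X (k + l) ω) ∂ℙ)
        atTop
        (nhds ((∫ ω, f (fun l => X l ω) ∂ℙ) * ∫ ω, g (fun l => X l ω) ∂ℙ))) :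
    ∀ᵐ ω ∂ℙ, Tendsto
      (fun n => (∑ i ∈ Finset.range n, X i ω) / n) atTop (nhds (∫ ω, X 0 ω ∂ℙ)) := by
  set Φ : Ω → ℕ → ℝ := fun ω n => X n ω
  have hΦ : Measurable Φ := measurable_pi_lambda _ hmeas
  have herg : Ergodic leftShift (Measure.map Φ ℙ) := ergodic_leftShift_map hmeas hstat hmix
  have := Measure.isProbabilityMeasure_map hΦ.aemeasurable (μ := ℙ)
  -- `X 0` is only a.e. nonnegative, while the covering argument needs `f ≥ 0` everywhere.
  set f : (ℕ → ℝ) → ℝ := fun y => max (y 0) 0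
  have hf : Measurable f := (measurable_pi_apply 0).max measurable_const
  have hfi : Integrable f (Measure.map Φ ℙ) :=
    (integrable_map_measure hf.aestronglyMeasurable hΦ.aemeasurable).2 (hint 0).pos_part
  have hfX : ∫ y, f y ∂(Measure.map Φ ℙ) = ∫ ω, X 0 ω ∂ℙ := by
    rw [integral_map hΦ.aemeasurable hf.aestronglyMeasurable]
    exact integral_congr_ae (by filter_upwards [hnonneg 0] with ω h using max_eq_left h)
  filter_upwards [ae_of_ae_map hΦ.aemeasurable
      (herg.ae_tendsto_birkhoffAverage_of_nonneg hf (fun y => le_max_right _ _) hfi),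
    ae_all_iff.2 hnonneg] with ω hω hX
  rw [hfX] at hω
  refine hω.congr fun n => ?_
  simp [birkhoffAverage, birkhoffSum, leftShift_iterate_apply, f, Φ, max_eq_left (hX _),
    div_eq_inv_mul]
end

section
/- Let (X_i)_{i≥0} be a stationary sequence of real random variables. Suppose that for every n, m and every k > n+1 there exist random variables (X̄_k, …, X̄_{k+m}) such that: (1) X_{k+j} ≤ X̄_{k+j} for all 0 ≤ j ≤ m; (2) (X̄_k, …, X̄_{k+m}) is independent of (X_0, …, X_n); (3) (X̄_k, …, X̄_{k+m}) converges in distribution to (X_0, …, X_m) as k → ∞; and (4) sup_{i ≥ k} P(X̄_i ≠ X_i) → 0 as k → ∞. Then the sequence (X_i) is mixing: for all bounded continuous f, g, E[f(X_0,…,X_n) g(X_k,…,X_{k+m})] → E[f(X_0,…,X_n)] E[g(X_0,…,X_m)]. -/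
/-!
Couple the block `(X_k, …, X_{k+m})` with `X̄ = (X̄_k, …, X̄_{k+m})`, which is independent of
`(X_0, …, X_n)`. Then `E[f·g(X̄)] = E[f]·E[g(X̄)] → E[f]·E[g(X_0, …, X_m)]`, while replacing `X̄` by
the true block changes the integrand only on `{X̄ ≠ X}`, whose probability is at most `m + 1`
times `sup_{i ≥ k} P(X̄_i ≠ X_i)`.
-/

open MeasureTheory ProbabilityTheory Filter Topology

section Coupling

variable {Ω : Type*} [MeasurableSpace Ω] {μ : Measure Ω}

lemma abs_integral_mul_sub_le_measureReal [IsFiniteMeasure μ] {F G G' : Ω → ℝ} {a b : ℝ}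
    {s : Set Ω} (hF : ∀ ω, |F ω| ≤ a) (hG : ∀ ω, |G ω| ≤ b) (hG' : ∀ ω, |G' ω| ≤ b)
    (heq : ∀ ω ∉ s, G ω = G' ω) :
    |∫ ω, F ω * (G ω - G' ω) ∂μ| ≤ 2 * a * b * μ.real s := by
  have hvanish : ∀ ω ∉ s, F ω * (G ω - G' ω) = 0 := fun ω hω => by
    rw [heq ω hω, sub_self, mul_zero]
  rw [← Real.norm_eq_abs, ← setIntegral_eq_integral_of_forall_compl_eq_zero hvanish]
  refine norm_setIntegral_le_of_norm_le_const (measure_lt_top μ s) fun ω _ => ?_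
  calc ‖F ω * (G ω - G' ω)‖ = |F ω| * |G ω - G' ω| := by rw [Real.norm_eq_abs, abs_mul]
    _ ≤ a * (b + b) := mul_le_mul (hF ω) ((abs_sub _ _).trans (add_le_add (hG ω) (hG' ω)))
        (abs_nonneg _) ((abs_nonneg _).trans (hF ω))
    _ = 2 * a * b := by ring

lemma measureReal_setOf_ne_le_card_mul_iSup {ι β : Type*} [Fintype ι] (Y Y' : Ω → ι → β) :
    μ.real {ω | Y ω ≠ Y' ω} ≤ Fintype.card ι * ⨆ j, μ.real {ω | Y ω j ≠ Y' ω j} := by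
  have hunion : {ω | Y ω ≠ Y' ω} = ⋃ j, {ω | Y ω j ≠ Y' ω j} := by
    ext ω
    simp [Function.ne_iff]
  calc μ.real {ω | Y ω ≠ Y' ω} ≤ ∑ j, μ.real {ω | Y ω j ≠ Y' ω j} :=
        hunion ▸ measureReal_iUnion_fintype_le _
    _ ≤ Fintype.card ι * ⨆ j, μ.real {ω | Y ω j ≠ Y' ω j} := by
        simpa [nsmul_eq_mul] using Finset.sum_le_card_nsmul Finset.univ _ _
          fun j _ => le_ciSup (Set.finite_range fun j => μ.real {ω | Y ω j ≠ Y' ω j}).bddAbove j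

theorem tendsto_integral_mul_of_coupling [IsProbabilityMeasure μ] {E ι β : Type*}
    [MeasurableSpace E] [MeasurableSpace β] [Fintype ι] {Z : Ω → E} {Y Ybar : ℕ → Ω → ι → β}
    {f : E → ℝ} {g : (ι → β) → ℝ} {Cf Cg L : ℝ} (hZ : Measurable Z) (hY : ∀ k, Measurable (Y k))
    (hYbar : ∀ k, Measurable (Ybar k)) (hf : Measurable f) (hg : Measurable g)
    (hfC : ∀ x, |f x| ≤ Cf) (hgC : ∀ y, |g y| ≤ Cg)
    (hindep : ∀ᶠ k in atTop, IndepFun (Ybar k) Z μ)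
    (hlim : Tendsto (fun k => ∫ ω, g (Ybar k ω) ∂μ) atTop (𝓝 L))
    (hcoupling : Tendsto (fun k => ⨆ j, μ.real {ω | Ybar k ω j ≠ Y k ω j}) atTop (𝓝 0)) :
    Tendsto (fun k => ∫ ω, f (Z ω) * g (Y k ω) ∂μ) atTop (𝓝 ((∫ ω, f (Z ω) ∂μ) * L)) := by
  obtain ⟨ω₀⟩ := nonempty_of_isProbabilityMeasure μ
  have hCf : 0 ≤ Cf := (abs_nonneg _).trans (hfC (Z ω₀))
  have hint : ∀ {V : Ω → ι → β}, Measurable V → Integrable (fun ω => f (Z ω) * g (V ω)) μ :=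
    fun hV => .of_bound ((hf.comp hZ).mul (hg.comp hV)).aestronglyMeasurable (Cf * Cg) <|
      .of_forall fun ω => by
        rw [Real.norm_eq_abs, abs_mul]
        exact mul_le_mul (hfC _) (hgC _) (abs_nonneg _) hCf
  have hbar : Tendsto (fun k => ∫ ω, f (Z ω) * g (Ybar k ω) ∂μ) atTop
      (𝓝 ((∫ ω, f (Z ω) ∂μ) * L)) := by
    refine (hlim.const_mul _).congr' (hindep.mono fun k hk => ?_)
    exact ((hk.comp hg hf).symm.integral_fun_mul_eq_mul_integral
      (hf.comp hZ).aestronglyMeasurable (hg.comp (hYbar k)).aestronglyMeasurable).symm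
  have hdist : ∀ k, dist (∫ ω, f (Z ω) * g (Ybar k ω) ∂μ) (∫ ω, f (Z ω) * g (Y k ω) ∂μ)
      ≤ 2 * Cf * Cg * (Fintype.card ι * ⨆ j, μ.real {ω | Ybar k ω j ≠ Y k ω j}) := fun k => by
    rw [Real.dist_eq, ← integral_sub (hint (hYbar k)) (hint (hY k))]
    simp_rw [← mul_sub]
    refine (abs_integral_mul_sub_le_measureReal (s := {ω | Ybar k ω ≠ Y k ω})
      (fun ω => hfC (Z ω)) (fun _ => hgC _) (fun _ => hgC _)
      fun ω hω => congrArg g (not_not.mp hω)).trans ?_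
    have hCg : 0 ≤ Cg := (abs_nonneg _).trans (hgC (Y k ω₀))
    gcongr
    exact measureReal_setOf_ne_le_card_mul_iSup _ _
  refine hbar.congr_dist (squeeze_zero (fun _ => dist_nonneg) hdist ?_)
  simpa using (hcoupling.const_mul _).const_mul (2 * Cf * Cg)

end Coupling

theorem stmt4_general {Ω : Type*} [MeasureSpace Ω] [IsProbabilityMeasure (ℙ : Measure Ω)]
    (X : ℕ → Ω → ℝ)
    (hmeas : ∀ i, Measurable (X i))
    (Xbar : ℕ → ℕ → ℕ → ℕ → Ω → ℝ)
    -- `Xbar n m k j` plays the role of `X̄_{k+j}` for `0 ≤ j ≤ m`, `k > n+1`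
    (hXbarmeas : ∀ n m k j, Measurable (Xbar n m k j))
    (hindep : ∀ n m k, k > n + 1 →
      IndepFun (fun ω (j : Fin (m + 1)) => Xbar n m k j ω)
        (fun ω (l : Fin (n + 1)) => X l ω) ℙ)
    (hweak : ∀ n m (g : (Fin (m + 1) → ℝ) → ℝ), Continuous g → (∃ Cg, ∀ x, |g x| ≤ Cg) →
      Tendsto (fun k => ∫ ω, g (fun j => Xbar n m k j ω) ∂ℙ) atTop
        (nhds (∫ ω, g (fun j : Fin (m + 1) => X j ω) ∂ℙ)))
    (hsup : ∀ n m, Tendsto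
      (fun k => ⨆ j : Fin (m + 1), (ℙ {ω | Xbar n m k j ω ≠ X (k + j) ω}).toReal)
      atTop (nhds 0)) :
    ∀ (n m : ℕ) (f : (Fin (n + 1) → ℝ) → ℝ) (g : (Fin (m + 1) → ℝ) → ℝ),
      Continuous f → Continuous g →
      (∃ Cf, ∀ x, |f x| ≤ Cf) → (∃ Cg, ∀ x, |g x| ≤ Cg) →
      Tendsto
        (fun k => ∫ ω, f (fun l => X l ω) * g (fun l => X (k + l) ω) ∂ℙ)
        atTop
        (nhds ((∫ ω, f (fun l => X l ω) ∂ℙ) * ∫ ω, g (fun l : Fin (m + 1) => X l ω) ∂ℙ)) := by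
  rintro n m f g hf hg ⟨Cf, hfC⟩ ⟨Cg, hgC⟩
  exact tendsto_integral_mul_of_coupling (measurable_pi_lambda _ fun l => hmeas l)
    (fun k => measurable_pi_lambda _ fun l => hmeas _)
    (fun k => measurable_pi_lambda _ fun j => hXbarmeas _ _ _ _) hf.measurable hg.measurable hfC
    hgC ((eventually_gt_atTop (n + 1)).mono (hindep n m)) (hweak n m g hg ⟨Cg, hgC⟩) (hsup n m)

theorem stmt4 {Ω : Type*} [MeasureSpace Ω] [IsProbabilityMeasure (ℙ : Measure Ω)]
    (X : ℕ → Ω → ℝ)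
    (hmeas : ∀ i, Measurable (X i))
    (hstat : ∀ i j : ℕ,
      Measure.map (fun ω (l : Fin (j + 1)) => X (i + l) ω) ℙ
        = Measure.map (fun ω (l : Fin (j + 1)) => X l ω) ℙ)
    (Xbar : ℕ → ℕ → ℕ → ℕ → Ω → ℝ)
    -- `Xbar n m k j` plays the role of `X̄_{k+j}` for `0 ≤ j ≤ m`, `k > n+1`
    (hXbarmeas : ∀ n m k j, Measurable (Xbar n m k j))
    (hdom : ∀ n m k j, k > n + 1 → j ≤ m →
      ∀ᵐ ω ∂ℙ, X (k + j) ω ≤ Xbar n m k j ω)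
    (hindep : ∀ n m k, k > n + 1 →
      IndepFun (fun ω (j : Fin (m + 1)) => Xbar n m k j ω)
        (fun ω (l : Fin (n + 1)) => X l ω) ℙ)
    (hweak : ∀ n m (g : (Fin (m + 1) → ℝ) → ℝ), Continuous g → (∃ Cg, ∀ x, |g x| ≤ Cg) →
      Tendsto (fun k => ∫ ω, g (fun j => Xbar n m k j ω) ∂ℙ) atTop
        (nhds (∫ ω, g (fun j : Fin (m + 1) => X j ω) ∂ℙ)))
    (hsup : ∀ n m, Tendsto
      (fun k => ⨆ j : Fin (m + 1), (ℙ {ω | Xbar n m k j ω ≠ X (k + j) ω}).toReal)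
      atTop (nhds 0)) :
    ∀ (n m : ℕ) (f : (Fin (n + 1) → ℝ) → ℝ) (g : (Fin (m + 1) → ℝ) → ℝ),
      Continuous f → Continuous g →
      (∃ Cf, ∀ x, |f x| ≤ Cf) → (∃ Cg, ∀ x, |g x| ≤ Cg) →
      Tendsto
        (fun k => ∫ ω, f (fun l => X l ω) * g (fun l => X (k + l) ω) ∂ℙ)
        atTop
        (nhds ((∫ ω, f (fun l => X l ω) ∂ℙ) * ∫ ω, g (fun l : Fin (m + 1) => X l ω) ∂ℙ)) :=
  stmt4_general X hmeas Xbar hXbarmeas hindep hweak hsup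
end
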